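/- Let S be a Markov transition kernel on a measurable space (E, ℰ), let ν be a probability measure on E, and let c ∈ (0, 1], η ≥ 0 be such that for every z ∈ E and every A ∈ ℰ, (δ_z S)(A) ≥ c·ν(A) − η. Then for all z₁, z₂ ∈ E, the total variation distance satisfies ‖δ_{z₁} S − δ_{z₂} S‖_{TV} ≤ 2(1 − c + 2η), where ‖μ‖_{TV} denotes the total mass of |μ| for a signed measure μ. -/

import Mathlib

/-!
Take a Hahn set `i` of `s = δ_{z₁} S − δ_{z₂} S`; the total variation of `s` is `s i − s iᶜ`, so it
suffices to bound `|s A|` by `1 − c + 2η` for every measurable `A`. Writing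
`δ_{z₁}S(A) = 1 − δ_{z₁}S(Aᶜ)` and applying the minorization to `Aᶜ` under `z₁` and to `A`
under `z₂` gives `s A ≤ 1 − c (ν A + ν Aᶜ) + 2η = 1 − c + 2η`, and symmetrically for `−s A`.
-/

open MeasureTheory ProbabilityTheory Set

namespace MeasureTheory

theorem SignedMeasure.totalVariation_real_univ_le {α : Type*} [MeasurableSpace α]
    (s : SignedMeasure α) {b : ℝ} (h : ∀ A, MeasurableSet A → |s A| ≤ b) :
    s.totalVariation.real univ ≤ 2 * b := by
  obtain ⟨i, hi, hpos_i, hneg_ic, hpos, hneg⟩ := s.toJordanDecomposition_spec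
  have htv : s.totalVariation.real univ = s i - s iᶜ := by
    rw [SignedMeasure.totalVariation, measureReal_add_apply, hpos, hneg,
      SignedMeasure.toMeasureOfZeroLE_real_apply _ hpos_i hi MeasurableSet.univ,
      SignedMeasure.toMeasureOfLEZero_real_apply _ hneg_ic hi.compl MeasurableSet.univ,
      inter_univ, inter_univ, sub_eq_add_neg]
  rw [htv]
  linarith [le_abs_self (s i), neg_abs_le (s iᶜ), h i hi, h iᶜ hi.compl]

theorem Measure.real_sub_real_le_of_minorized {α : Type*} [MeasurableSpace α]
    {μ μ' ν : Measure α} [IsProbabilityMeasure μ] [IsProbabilityMeasure ν] {c η : ℝ}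
    (hμ : ∀ A, MeasurableSet A → c * ν.real A - η ≤ μ.real A)
    (hμ' : ∀ A, MeasurableSet A → c * ν.real A - η ≤ μ'.real A)
    {A : Set α} (hA : MeasurableSet A) :
    μ.real A - μ'.real A ≤ 1 - c + 2 * η := by
  have hμ_compl := hμ Aᶜ hA.compl
  rw [probReal_compl_eq_one_sub (μ := μ) hA, probReal_compl_eq_one_sub (μ := ν) hA] at hμ_compl
  linarith [hμ' A hA]

end MeasureTheory

theorem stmt_9_general {E : Type*} [MeasurableSpace E] (S : Kernel E E) [IsMarkovKernel S]
    (ν : Measure E) [IsProbabilityMeasure ν] (c η : ℝ)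
    (h : ∀ z : E, ∀ A : Set E, MeasurableSet A →
      c * (ν A).toReal - η ≤ ((S z) A).toReal) :
    ∀ z₁ z₂ : E,
      ((((S z₁).toSignedMeasure - (S z₂).toSignedMeasure).totalVariation)
          Set.univ).toReal ≤ 2 * (1 - c + 2 * η) := by
  intro z₁ z₂
  refine SignedMeasure.totalVariation_real_univ_le _ fun A hA => ?_
  rw [Measure.toSignedMeasure_sub_apply hA, abs_sub_le_iff]
  exact ⟨Measure.real_sub_real_le_of_minorized (h z₁) (h z₂) hA,
    Measure.real_sub_real_le_of_minorized (h z₂) (h z₁) hA⟩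

/-- Quantitative Dobrushin-type contraction: if a Markov kernel `S` on `(E, ℰ)`
satisfies `(δ_z S)(A) ≥ c ν(A) − η` for all `z` and measurable `A`, for some
probability measure `ν`, `c ∈ (0,1]` and `η ≥ 0`, then for all `z₁, z₂`,
`‖δ_{z₁} S − δ_{z₂} S‖_TV ≤ 2(1 − c + 2η)`, where the total variation norm of a
signed measure is the total mass of its total variation. -/
theorem stmt_9 {E : Type*} [MeasurableSpace E] (S : Kernel E E) [IsMarkovKernel S]
    (ν : Measure E) [IsProbabilityMeasure ν] (c η : ℝ)
    (hc : c ∈ Set.Ioc (0 : ℝ) 1) (hη : 0 ≤ η)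
    (h : ∀ z : E, ∀ A : Set E, MeasurableSet A →
      c * (ν A).toReal - η ≤ ((S z) A).toReal) :
    ∀ z₁ z₂ : E,
      ((((S z₁).toSignedMeasure - (S z₂).toSignedMeasure).totalVariation)
          Set.univ).toReal ≤ 2 * (1 - c + 2 * η) :=
  stmt_9_general S ν c η h
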